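/- Let β, c be real parameters. For every nonzero real polynomial p there exists a real polynomial q with deg q < deg p (in particular q = 0 when p is constant) such that for every x ≠ 0, (𝔇 p)(x) = q(x); that is, the generalized Dunkl operator 𝔇 maps any polynomial of degree n to a polynomial of degree at most n − 1. -/

import Mathlib

/-!
Clearing denominators, `2x³ (𝔇 p)(x)` is the value at `x` of a polynomial
`N p = dunklNumerator β c p` that depends linearly on `p` and has degree at most `deg p + 2`.
The point is that `X³ ∣ N p`: by linearity it suffices to take `p = Xⁿ`; for `n ≥ 3` this holds
because the cleared coefficients `2x³B` and `2x³C` of the derivative terms vanish at `0`, and for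
`n ≤ 2` the poles of `A`, `B`, `C` cancel by direct computation. Hence `𝔇 p = N p / (2X³)` has
degree at most `deg p - 1`.
-/

noncomputable section

/-- The generalized Dunkl operator `𝔇`: acts on `f` at `x ≠ 0` by
`A(x)(f(x) - f(-x)) + B(x) f'(x) - C(x) f'(-x)` (the last term being `C(x)` times
minus the value at `x` of the derivative of the reflection `t ↦ f (-t)`). -/
noncomputable def Dop (β c : ℝ) (f : ℝ → ℝ) (x : ℝ) : ℝ :=
  (c ^ 2 / x ^ 3 - c * (c - 1) / (2 * x ^ 2) + β * (c + 1) / (2 * x)) * (f x - f (-x))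
    + ((x ^ 2 - c ^ 2) / x ^ 2) * deriv f x
    - (c * (x + c) * (1 - x) / x ^ 2) * deriv f (-x)

open Polynomial

lemma degree_lt_of_natDegree_X_pow_mul_le {R : Type*} [Semiring R] [Nontrivial R]
    {p q : R[X]} (hp : p ≠ 0) {k : ℕ} (h : (X ^ (k + 1) * q).natDegree ≤ p.natDegree + k) :
    q.degree < p.degree := by
  rcases eq_or_ne q 0 with rfl | hq
  · simpa [bot_lt_iff_ne_bot] using hp
  · rw [natDegree_X_pow_mul _ hq] at h
    exact degree_lt_degree (by omega)

def dunklNumerator (β c : ℝ) : ℝ[X] →ₗ[ℝ] ℝ[X] where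
  toFun p := (2 * C c ^ 2 - C c * (C c - 1) * X + C β * (C c + 1) * X ^ 2) * (p - p.comp (-X))
    + 2 * X * (X ^ 2 - C c ^ 2) * derivative p
    - 2 * C c * X * (X + C c) * (1 - X) * (derivative p).comp (-X)
  map_add' p q := by
    simp only [map_add, add_comp]
    ring
  map_smul' a p := by
    simp only [smul_eq_C_mul, derivative_C_mul, mul_comp, C_comp, RingHom.id_apply]
    ring

lemma eval_dunklNumerator (β c : ℝ) (p : ℝ[X]) {x : ℝ} (hx : x ≠ 0) :
    (dunklNumerator β c p).eval x = 2 * x ^ 3 * Dop β c (fun t => p.eval t) x := by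
  simp only [dunklNumerator, LinearMap.coe_mk, AddHom.coe_mk, Dop, Polynomial.deriv, eval_add,
    eval_sub, eval_mul, eval_pow, eval_C, eval_X, eval_comp, eval_neg, eval_one, eval_ofNat]
  field_simp

lemma X_pow_three_dvd_dunklNumerator_X_pow_three_mul (β c : ℝ) (r : ℝ[X]) :
    X ^ 3 ∣ dunklNumerator β c (X ^ 3 * r) :=
  ⟨(2 * C c ^ 2 - C c * (C c - 1) * X + C β * (C c + 1) * X ^ 2) * (r + r.comp (-X))
      + 2 * (X ^ 2 - C c ^ 2) * (3 * r + X * derivative r)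
      - 2 * C c * (X + C c) * (1 - X) * (3 * r.comp (-X) - X * (derivative r).comp (-X)), by
    simp [dunklNumerator, mul_comp, C_ofNat]
    ring⟩

lemma X_pow_three_dvd_dunklNumerator_X_pow (β c : ℝ) (n : ℕ) :
    X ^ 3 ∣ dunklNumerator β c (X ^ n) := by
  match n with
  | 0 => simp [dunklNumerator]
  | 1 => exact ⟨2 * (C β + 1) * (C c + 1), by simp [dunklNumerator]; ring⟩
  | 2 => exact ⟨4 * (1 - C c) * (X + C c), by simp [dunklNumerator]; ring⟩
  | k + 3 =>
    rw [pow_add, mul_comm]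
    exact X_pow_three_dvd_dunklNumerator_X_pow_three_mul β c _

lemma X_pow_three_dvd_dunklNumerator (β c : ℝ) (p : ℝ[X]) :
    X ^ 3 ∣ dunklNumerator β c p := by
  induction p using Polynomial.induction_on' with
  | add p q hp hq => rw [map_add]; exact dvd_add hp hq
  | monomial n a =>
    rw [← C_mul_X_pow_eq_monomial, ← smul_eq_C_mul, map_smul, smul_eq_C_mul]
    exact dvd_mul_of_dvd_right (X_pow_three_dvd_dunklNumerator_X_pow β c n) _

lemma natDegree_dunklNumerator_le (β c : ℝ) (p : ℝ[X]) :
    (dunklNumerator β c p).natDegree ≤ p.natDegree + 2 := by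
  rcases eq_or_ne p.natDegree 0 with h0 | h0
  · rw [eq_C_of_natDegree_eq_zero h0]
    simp [dunklNumerator]
  have hder := natDegree_derivative_lt h0
  have hcomp (q : ℝ[X]) : (q.comp (-X)).natDegree ≤ q.natDegree :=
    natDegree_comp_le.trans (by simp)
  simp only [dunklNumerator, LinearMap.coe_mk, AddHom.coe_mk]
  compute_degree
  have := hcomp p
  have := hcomp (derivative p)
  omega

/-- The generalized Dunkl operator `𝔇` maps any nonzero polynomial of degree `n`
to a polynomial of degree at most `n - 1` (in particular to `0` when `n = 0`). -/
theorem D_lowers_degree (β c : ℝ) (p : Polynomial ℝ) (hp : p ≠ 0) :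
    ∃ q : Polynomial ℝ, q.degree < p.degree ∧
      ∀ x : ℝ, x ≠ 0 → Dop β c (fun t => p.eval t) x = q.eval x := by
  obtain ⟨q, hq⟩ := X_pow_three_dvd_dunklNumerator β c p
  refine ⟨C 2⁻¹ * q, ?_, fun x hx => ?_⟩
  · rw [degree_C_mul (by norm_num)]
    refine degree_lt_of_natDegree_X_pow_mul_le (k := 2) hp ?_
    rw [← hq]
    exact natDegree_dunklNumerator_le β c p
  · have h := eval_dunklNumerator β c p hx
    rw [hq, eval_mul, eval_X_pow] at h
    rw [eval_mul, eval_C]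
    apply mul_left_cancel₀ (pow_ne_zero 3 hx)
    linear_combination (-1 / 2 : ℝ) * h
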